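/- Let f : X → X be a continuous pointed self-map of a pointed topological space, π : X ∨ X → X the pinch map, ι : X → X ∨ X the inclusion onto the second summand, and v = ι ∘ π ∘ (1_X ∨ f) : X ∨ X → X ∨ X. Then for every k > 1 one has cat(v^k) = cat(f^{k-1}). -/

import Mathlib

/-!
With `g = π ∘ (1 ∨ f) : X ∨ X → X` one has `v^k = ι ∘ f^(k-1) ∘ g`, and conversely
`f^(k-1) = π ∘ v^k ∘ j` for the left inclusion `j`, because `g ∘ j = 1` and `π ∘ ι = 1`.
Categorical sets pull back along precomposition and survive postcomposition, so maps that
factor through each other in this way admit categorical covers of the same sizes.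
-/

open ContinuousMap Set

section LS

variable {X Y : Type*} [TopologicalSpace X] [TopologicalSpace Y]

/-- A set `A ⊆ X` is `f`-categorical if it is open and the restriction of `f`
to `A` is null-homotopic. -/
def IsCatSet (f : C(X, Y)) (A : Set X) : Prop :=
  IsOpen A ∧ ContinuousMap.Nullhomotopic (f.restrict A)

/-- The Lusternik–Schnirelmann category of a map `f : X → Y`: the minimal number `n`
such that `X` admits a covering by `n` `f`-categorical sets. -/
noncomputable def catMap (f : C(X, Y)) : ℕ :=
  sInf {n : ℕ | ∃ A : Fin n → Set X, (∀ i, IsCatSet f (A i)) ∧ (⋃ i, A i) = Set.univ}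

/-- The Lusternik–Schnirelmann category of a space: `cat X = cat (id X)`. -/
noncomputable def catSpace (X : Type*) [TopologicalSpace X] : ℕ :=
  catMap (ContinuousMap.id X)

/-- The `k`-fold iterate of a continuous self-map. -/
def cIter (f : C(X, X)) : ℕ → C(X, X)
  | 0 => ContinuousMap.id X
  | n + 1 => f.comp (cIter f n)

theorem cIter_basepoint (f : C(X, X)) {x₀ : X} (hf : f x₀ = x₀) :
    ∀ k, cIter f k x₀ = x₀
  | 0 => rfl
  | k + 1 => by
      simp only [cIter, ContinuousMap.comp_apply, cIter_basepoint f hf k, hf]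

end LS

section Wedge

variable (X A : Type*) [TopologicalSpace X] [TopologicalSpace A] (x₀ : X) (a₀ : A)

/-- The relation identifying the base points in the disjoint union. -/
inductive WedgeRel : X ⊕ A → X ⊕ A → Prop
  | base : WedgeRel (Sum.inl x₀) (Sum.inr a₀)

/-- The wedge (one-point union) of two pointed spaces. -/
def Wedge : Type _ := Quot (WedgeRel X A x₀ a₀)

instance : TopologicalSpace (Wedge X A x₀ a₀) :=
  inferInstanceAs (TopologicalSpace (Quot _))

/-- Projection onto the wedge. -/
def Wedge.mk : X ⊕ A → Wedge X A x₀ a₀ := Quot.mk _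

/-- The base point of the wedge. -/
def Wedge.pt : Wedge X A x₀ a₀ := Wedge.mk X A x₀ a₀ (Sum.inl x₀)

variable {X A x₀ a₀}
variable {Y B : Type*} [TopologicalSpace Y] [TopologicalSpace B] {y₀ : Y} {b₀ : B}

/-- The wedge `f ∨ g` of two pointed maps. -/
def wedgeMap (f : C(X, Y)) (g : C(A, B)) (hf : f x₀ = y₀) (hg : g a₀ = b₀) :
    C(Wedge X A x₀ a₀, Wedge Y B y₀ b₀) where
  toFun := Quot.lift (fun p => Wedge.mk Y B y₀ b₀ (Sum.map f g p)) (by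
    rintro _ _ ⟨⟩
    simp only [Sum.map_inl, Sum.map_inr, hf, hg]
    exact Quot.sound WedgeRel.base)
  continuous_toFun :=
    continuous_quot_lift _ ((continuous_quot_mk).comp (f.continuous.sumMap g.continuous))

@[simp] theorem wedgeMap_mk (f : C(X, Y)) (g : C(A, B)) (hf : f x₀ = y₀) (hg : g a₀ = b₀)
    (p : X ⊕ A) :
    wedgeMap f g hf hg (Wedge.mk X A x₀ a₀ p) = Wedge.mk Y B y₀ b₀ (Sum.map f g p) :=
  rfl

/-- The pinch (fold) map `X ∨ X → X`, induced by the identity on each summand. -/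
def pinch (X : Type*) [TopologicalSpace X] (x₀ : X) : C(Wedge X X x₀ x₀, X) where
  toFun := Quot.lift (Sum.elim id id) (by rintro _ _ ⟨⟩; rfl)
  continuous_toFun := continuous_quot_lift _ (continuous_id.sumElim continuous_id)

@[simp] theorem pinch_mk (X : Type*) [TopologicalSpace X] (x₀ : X) (p : X ⊕ X) :
    pinch X x₀ (Wedge.mk X X x₀ x₀ p) = Sum.elim id id p :=
  rfl

/-- The inclusion of `X` onto the second summand of `X ∨ X`. -/
def inclRight (X : Type*) [TopologicalSpace X] (x₀ : X) : C(X, Wedge X X x₀ x₀) where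
  toFun x := Wedge.mk X X x₀ x₀ (Sum.inr x)
  continuous_toFun := (continuous_quot_mk).comp continuous_inr

@[simp] theorem inclRight_apply (X : Type*) [TopologicalSpace X] (x₀ : X) (x : X) :
    inclRight X x₀ x = Wedge.mk X X x₀ x₀ (Sum.inr x) :=
  rfl

/-- The map `u = ι ∘ π ∘ (1 ∨ ε) : Y ∨ Y → Y ∨ Y` from the paper. -/
def uMap (Y : Type*) [TopologicalSpace Y] (y₀ : Y) : C(Wedge Y Y y₀ y₀, Wedge Y Y y₀ y₀) :=
  (inclRight Y y₀).comp ((pinch Y y₀).comp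
    (wedgeMap (ContinuousMap.id Y) (ContinuousMap.const Y y₀) rfl rfl))

/-- The map `v = ι ∘ π ∘ (1 ∨ f) : X ∨ X → X ∨ X` from the paper. -/
def vMap {X : Type*} [TopologicalSpace X] {x₀ : X} (f : C(X, X)) (hf : f x₀ = x₀) :
    C(Wedge X X x₀ x₀, Wedge X X x₀ x₀) :=
  (inclRight X x₀).comp ((pinch X x₀).comp (wedgeMap (ContinuousMap.id X) f rfl hf))

/-- `u` is a pointed map. -/
theorem uMap_pt (Y : Type*) [TopologicalSpace Y] (y₀ : Y) :
    uMap Y y₀ (Wedge.pt Y Y y₀ y₀) = Wedge.pt Y Y y₀ y₀ := by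
  simp only [uMap, Wedge.pt, ContinuousMap.comp_apply, wedgeMap_mk, Sum.map_inl,
    ContinuousMap.id_apply, pinch_mk, Sum.elim_inl, id_eq, inclRight_apply]
  exact (Quot.sound WedgeRel.base).symm

/-- `v` is a pointed map. -/
theorem vMap_pt {X : Type*} [TopologicalSpace X] {x₀ : X} (f : C(X, X)) (hf : f x₀ = x₀) :
    vMap f hf (Wedge.pt X X x₀ x₀) = Wedge.pt X X x₀ x₀ := by
  simp only [vMap, Wedge.pt, ContinuousMap.comp_apply, wedgeMap_mk, Sum.map_inl,
    ContinuousMap.id_apply, pinch_mk, Sum.elim_inl, id_eq, inclRight_apply]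
  exact (Quot.sound WedgeRel.base).symm

end Wedge

section Category

variable {X Y X' Y' : Type*} [TopologicalSpace X] [TopologicalSpace Y]
  [TopologicalSpace X'] [TopologicalSpace Y']

def HasCatCover (f : C(X, Y)) (n : ℕ) : Prop :=
  ∃ A : Fin n → Set X, (∀ i, IsCatSet f (A i)) ∧ (⋃ i, A i) = Set.univ

theorem IsCatSet.comp_left {f : C(X, Y)} {A : Set X} (hA : IsCatSet f A) (h : C(Y, Y')) :
    IsCatSet (h.comp f) A :=
  ⟨hA.1, hA.2.comp_right h⟩

theorem IsCatSet.preimage {f : C(X, Y)} {A : Set X} (hA : IsCatSet f A) (g : C(X', X)) :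
    IsCatSet (f.comp g) (g ⁻¹' A) :=
  ⟨hA.1.preimage g.continuous, hA.2.comp_left (g.restrictPreimage A)⟩

theorem HasCatCover.comp {f : C(X, Y)} {n : ℕ} (hf : HasCatCover f n) (g : C(X', X))
    (h : C(Y, Y')) : HasCatCover (h.comp (f.comp g)) n := by
  obtain ⟨A, hA, hcov⟩ := hf
  refine ⟨fun i => g ⁻¹' A i, fun i => ((hA i).preimage g).comp_left h, ?_⟩
  rw [← Set.preimage_iUnion, hcov, Set.preimage_univ]

theorem catMap_eq_of_factors {f : C(X, Y)} {f' : C(X', Y')} (g : C(X', X)) (h : C(Y, Y'))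
    (g' : C(X, X')) (h' : C(Y', Y)) (hf' : f' = h.comp (f.comp g))
    (hf : f = h'.comp (f'.comp g')) : catMap f = catMap f' := by
  unfold catMap
  congr 1
  ext n
  exact ⟨fun hn => hf' ▸ HasCatCover.comp hn g h, fun hn => hf ▸ HasCatCover.comp hn g' h'⟩

end Category

section Wedge

variable {X : Type*} [TopologicalSpace X] {x₀ : X}

def inclLeft (X : Type*) [TopologicalSpace X] (x₀ : X) : C(X, Wedge X X x₀ x₀) where
  toFun x := Wedge.mk X X x₀ x₀ (Sum.inl x)
  continuous_toFun := continuous_quot_mk.comp continuous_inl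

def foldMap (f : C(X, X)) (hf : f x₀ = x₀) : C(Wedge X X x₀ x₀, X) :=
  (pinch X x₀).comp (wedgeMap (ContinuousMap.id X) f rfl hf)

theorem foldMap_comp_inclLeft (f : C(X, X)) (hf : f x₀ = x₀) :
    (foldMap f hf).comp (inclLeft X x₀) = ContinuousMap.id X :=
  rfl

theorem pinch_comp_inclRight : (pinch X x₀).comp (inclRight X x₀) = ContinuousMap.id X :=
  rfl

theorem vMap_comp_inclRight (f : C(X, X)) (hf : f x₀ = x₀) :
    (vMap f hf).comp (inclRight X x₀) = (inclRight X x₀).comp f :=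
  rfl

theorem cIter_vMap_succ (f : C(X, X)) (hf : f x₀ = x₀) (k : ℕ) :
    cIter (vMap f hf) (k + 1) = (inclRight X x₀).comp ((cIter f k).comp (foldMap f hf)) := by
  induction k with
  | zero => rfl
  | succ k ih =>
    rw [cIter, ih, ← comp_assoc, vMap_comp_inclRight]
    rfl

end Wedge

/-- for a pointed self-map `f : X → X` and `v = ι ∘ π ∘ (1_X ∨ f)`,
for every `k > 1` one has `cat (v^k) = cat (f^(k-1))`. -/
theorem catMap_cIter_vMap {X : Type*} [TopologicalSpace X] {x₀ : X}
    (f : C(X, X)) (hf : f x₀ = x₀) :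
    ∀ k : ℕ, 1 < k → catMap (cIter (vMap f hf) k) = catMap (cIter f (k - 1)) := by
  intro k hk
  obtain ⟨m, rfl⟩ : ∃ m, k = m + 1 := ⟨k - 1, by omega⟩
  refine (catMap_eq_of_factors (foldMap f hf) (inclRight X x₀) (inclLeft X x₀) (pinch X x₀)
    (cIter_vMap_succ f hf m) ?_).symm
  rw [cIter_vMap_succ, comp_assoc, comp_assoc,
    foldMap_comp_inclLeft, comp_id, ← comp_assoc, pinch_comp_inclRight, id_comp]
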